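/- Let (W, I) and (W', I') be finite-dimensional complex vector spaces each fitting into exact sequences 0 → V → W →^σ T → 0 and 0 → V' → W' →^{σ'} T → 0 over the same one-complex-dimensional space (T, j), with alternating trilinear forms Ω on W and Ω' on W' each satisfying the CRMS linear axioms (1-horizontality, fiberwise nondegeneracy, I-compatibility). If φ : W → W' is a real-linear isomorphism with σ' ∘ φ = σ (so φ maps V onto V') and Ω'(φξ, φv₁, φv₂) = Ω(ξ, v₁, v₂) for all ξ ∈ W, v₁, v₂ ∈ V, then φ(I v) = I' φ(v) for all v ∈ V. -/
import Mathlib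


/-- linear version of Lemma `verticalholom`: a form-preserving
isomorphism covering the identity is complex linear on the vertical subspace. -/
theorem stmt11 {W W' T : Type*}
    [AddCommGroup W] [Module ℝ W] [FiniteDimensional ℝ W]
    [AddCommGroup W'] [Module ℝ W'] [FiniteDimensional ℝ W']
    [AddCommGroup T] [Module ℝ T] [FiniteDimensional ℝ T]
    (I : W →ₗ[ℝ] W) (I' : W' →ₗ[ℝ] W') (jT : T →ₗ[ℝ] T)
    (hI : I ∘ₗ I = -LinearMap.id) (hI' : I' ∘ₗ I' = -LinearMap.id)
    (hjT : jT ∘ₗ jT = -LinearMap.id)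
    (hTdim : Module.finrank ℝ T = 2)
    (σ : W →ₗ[ℝ] T) (σ' : W' →ₗ[ℝ] T)
    (hσsurj : Function.Surjective σ) (hσ'surj : Function.Surjective σ')
    (hσI : σ ∘ₗ I = jT ∘ₗ σ) (hσ'I : σ' ∘ₗ I' = jT ∘ₗ σ')
    (Ω : W →ₗ[ℝ] W →ₗ[ℝ] W →ₗ[ℝ] ℝ) (Ω' : W' →ₗ[ℝ] W' →ₗ[ℝ] W' →ₗ[ℝ] ℝ)
    (hAlt1 : ∀ x y, Ω x x y = 0) (hAlt2 : ∀ x y, Ω x y y = 0)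
    (hAlt1' : ∀ x y, Ω' x x y = 0) (hAlt2' : ∀ x y, Ω' x y y = 0)
    (hhor : ∀ v₁ v₂ v₃, σ v₁ = 0 → σ v₂ = 0 → σ v₃ = 0 → Ω v₁ v₂ v₃ = 0)
    (hhor' : ∀ v₁ v₂ v₃, σ' v₁ = 0 → σ' v₂ = 0 → σ' v₃ = 0 → Ω' v₁ v₂ v₃ = 0)
    (hnd : ∀ ξ, σ ξ ≠ 0 → ∀ v, σ v = 0 → (∀ w, σ w = 0 → Ω ξ v w = 0) → v = 0)
    (hnd' : ∀ ξ, σ' ξ ≠ 0 → ∀ v, σ' v = 0 → (∀ w, σ' w = 0 → Ω' ξ v w = 0) → v = 0)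
    (hcomp : ∀ ξ v₁ v₂, σ v₁ = 0 → σ v₂ = 0 → Ω (I ξ) v₁ v₂ = -Ω ξ v₁ (I v₂))
    (hcomp' : ∀ ξ v₁ v₂, σ' v₁ = 0 → σ' v₂ = 0 → Ω' (I' ξ) v₁ v₂ = -Ω' ξ v₁ (I' v₂))
    (φ : W ≃ₗ[ℝ] W') (hφσ : ∀ x, σ' (φ x) = σ x)
    (hφΩ : ∀ ξ v₁ v₂, σ v₁ = 0 → σ v₂ = 0 →
      Ω' (φ ξ) (φ v₁) (φ v₂) = Ω ξ v₁ v₂) :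
    ∀ v, σ v = 0 → φ (I v) = I' (φ v) := by
  intro v hv
  -- antisymmetry in last two slots
  have anti : ∀ x y z : W, Ω x y z = -Ω x z y := by
    intro x y z
    have h := hAlt2 x (y + z)
    simp only [map_add, LinearMap.add_apply, hAlt2 x y, hAlt2 x z] at h
    linarith
  have anti' : ∀ x y z : W', Ω' x y z = -Ω' x z y := by
    intro x y z
    have h := hAlt2' x (y + z)
    simp only [map_add, LinearMap.add_apply, hAlt2' x y, hAlt2' x z] at h
    linarith
  -- I preserves vertical
  have hIv : ∀ w : W, σ w = 0 → σ (I w) = 0 := by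
    intro w hw
    have := congrFun (congrArg DFunLike.coe hσI) w
    simp only [LinearMap.comp_apply] at this
    rw [this, hw, map_zero]
  have hI'v : ∀ w : W', σ' w = 0 → σ' (I' w) = 0 := by
    intro w hw
    have := congrFun (congrArg DFunLike.coe hσ'I) w
    simp only [LinearMap.comp_apply] at this
    rw [this, hw, map_zero]
  -- pick ξ with σ ξ ≠ 0
  obtain ⟨t, ht⟩ : ∃ t : T, t ≠ 0 := by
    by_contra h
    push_neg at h
    have : Module.finrank ℝ T = 0 := by
      have : Subsingleton T := ⟨fun a b => by rw [h a, h b]⟩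
      exact Module.finrank_zero_of_subsingleton
    omega
  obtain ⟨ξ, hξ⟩ := hσsurj t
  have hξne : σ ξ ≠ 0 := by rw [hξ]; exact ht
  -- the difference d
  set d : W' := φ (I v) - I' (φ v) with hd
  have hσd : σ' d = 0 := by
    have h1 : σ' (φ (I v)) = 0 := by rw [hφσ]; exact hIv v hv
    have h2 : σ' (I' (φ v)) = 0 := hI'v _ (by rw [hφσ]; exact hv)
    simp [hd, map_sub, h1, h2]
  -- u := φ.symm (I' (φ ξ)) - I ξ  is vertical
  set u : W := φ.symm (I' (φ ξ)) - I ξ with hu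
  have hσu : σ u = 0 := by
    have h1 : σ (φ.symm (I' (φ ξ))) = jT (σ ξ) := by
      have := hφσ (φ.symm (I' (φ ξ)))
      rw [φ.apply_symm_apply] at this
      rw [← this]
      have h2 := congrFun (congrArg DFunLike.coe hσ'I) (φ ξ)
      simp only [LinearMap.comp_apply] at h2
      rw [h2, hφσ]
    have h3 : σ (I ξ) = jT (σ ξ) := by
      have := congrFun (congrArg DFunLike.coe hσI) ξ
      simpa only [LinearMap.comp_apply] using this
    simp [hu, map_sub, h1, h3]
  have key : I' (φ ξ) = φ (I ξ) + φ u := by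
    have : φ (φ.symm (I' (φ ξ))) = φ (I ξ + u) := by
      rw [hu]; congr 1; abel
    simpa [map_add] using this
  -- main computation
  have main : ∀ w : W', σ' w = 0 → Ω' (φ ξ) d w = 0 := by
    intro w' hw'
    obtain ⟨w, rfl⟩ : ∃ w : W, φ w = w' := ⟨φ.symm w', φ.apply_symm_apply w'⟩
    have hw : σ w = 0 := by rw [← hφσ]; exact hw'
    have e1 : Ω' (φ ξ) (φ (I v)) (φ w) = Ω ξ (I v) w := hφΩ ξ (I v) w (hIv v hv) hw
    have hφv : σ' (φ v) = 0 := by rw [hφσ]; exact hv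
    have hφw : σ' (φ w) = 0 := by rw [hφσ]; exact hw
    have e2 : Ω' (φ ξ) (I' (φ v)) (φ w) = Ω ξ (I v) w := by
      have c1 : Ω' (I' (φ ξ)) (φ w) (φ v) = -Ω' (φ ξ) (φ w) (I' (φ v)) :=
        hcomp' (φ ξ) (φ w) (φ v) hφw hφv
      have c2 : Ω' (I' (φ ξ)) (φ w) (φ v) = Ω (I ξ) w v := by
        rw [key]
        simp only [map_add, LinearMap.add_apply]
        rw [hφΩ (I ξ) w v hw hv, hφΩ u w v hw hv, hhor u w v hσu hw hv, add_zero]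
      have c3 : Ω (I ξ) w v = -Ω ξ w (I v) := hcomp ξ w v hw hv
      have c4 : Ω ξ w (I v) = -Ω ξ (I v) w := anti ξ w (I v)
      have c5 : Ω' (φ ξ) (φ w) (I' (φ v)) = -Ω' (φ ξ) (I' (φ v)) (φ w) :=
        anti' (φ ξ) (φ w) (I' (φ v))
      -- combine
      have : -Ω' (φ ξ) (φ w) (I' (φ v)) = Ω ξ (I v) w := by
        rw [← c1, c2, c3, c4]; ring
      linarith [this, c5]
    simp only [hd, map_sub, LinearMap.sub_apply, e1, e2, sub_self]
  have hξ' : σ' (φ ξ) ≠ 0 := by rw [hφσ]; exact hξne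
  have := hnd' (φ ξ) hξ' d hσd main
  have h0 : φ (I v) - I' (φ v) = 0 := this
  exact sub_eq_zero.mp h0
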